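/- arXiv:2303.05989 — 8 statements merged into one kernel-verified Lean document; each statement's English description precedes it below -/
import Mathlib

section
/- With communication weights, the h-relation cost can strictly underestimate the single-port scheduling length: there exists a communication instance where every processor sends and receives at most 4 units of data in total, yet the transfers cannot be scheduled into 4 consecutive unit-length-per-data-unit slots under the constraint that each weighted transfer occupies a contiguous interval and each processor sends at most one value and receives at most one value at any time. -/
/-- Senders of the six transfers: weight-3 transfers p1→p2, p2→p3, p3→p1,
and three weight-1 transfers from p4. -/
def wSender : Fin 6 → Fin 4 := ![0, 1, 2, 3, 3, 3]

/-- Receivers of the six transfers. -/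
def wReceiver : Fin 6 → Fin 4 := ![1, 2, 0, 0, 1, 2]

/-- Weights (durations) of the six transfers. -/
def wWeight : Fin 6 → ℝ := ![3, 3, 3, 1, 1, 1]

/-- With communication weights, the h-relation cost can strictly underestimate the
single-port scheduling length: in the instance where p1 sends weight 3 to p2, p2 sends
weight 3 to p3, p3 sends weight 3 to p1, and p4 sends weight 1 to each of p1, p2, p3
(so every processor sends and receives at most 4 units), the transfers cannot be assigned
contiguous intervals within the time budget [0,4] so that at any time each processor
sends at most one value and receives at most one value. -/
theorem weighted_h_relation_not_schedulable :
    ¬ ∃ s : Fin 6 → ℝ,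
      (∀ i, 0 ≤ s i ∧ s i + wWeight i ≤ 4) ∧
      (∀ i j, i ≠ j → wSender i = wSender j →
        (s i + wWeight i ≤ s j ∨ s j + wWeight j ≤ s i)) ∧
      (∀ i j, i ≠ j → wReceiver i = wReceiver j →
        (s i + wWeight i ≤ s j ∨ s j + wWeight j ≤ s i)) := by
  rintro ⟨s, hB, hS, hR⟩
  have b0 := hB 0; have b1 := hB 1; have b2 := hB 2
  have b3 := hB 3; have b4 := hB 4; have b5 := hB 5
  have r23 := hR 2 3 (by decide) (by decide)
  have r04 := hR 0 4 (by decide) (by decide)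
  have r15 := hR 1 5 (by decide) (by decide)
  have s34 := hS 3 4 (by decide) (by decide)
  have s35 := hS 3 5 (by decide) (by decide)
  have s45 := hS 4 5 (by decide) (by decide)
  have w0 : wWeight 0 = 3 := rfl
  have w1 : wWeight 1 = 3 := rfl
  have w2 : wWeight 2 = 3 := rfl
  have w3 : wWeight 3 = 1 := rfl
  have w4 : wWeight 4 = 1 := rfl
  have w5 : wWeight 5 = 1 := rfl
  rw [w2, w3] at r23
  rw [w0, w4] at r04
  rw [w1, w5] at r15
  rw [w3, w4] at s34
  rw [w3, w5] at s35
  rw [w4, w5] at s45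
  rw [w0] at b0; rw [w1] at b1; rw [w2] at b2
  rw [w3] at b3; rw [w4] at b4; rw [w5] at b5
  rcases r23 with h1 | h1 <;> rcases r04 with h2 | h2 <;> rcases r15 with h3 | h3 <;>
    rcases s34 with h4 | h4 <;> rcases s35 with h5 | h5 <;> rcases s45 with h6 | h6 <;>
    linarith [b0.1, b0.2, b1.1, b1.2, b2.1, b2.2, b3.1, b3.2, b4.1, b4.2, b5.1, b5.2]
end

section
/- For the fully-connected layered DAG of width k and length ℓ in the commdelay model with P = k processors and delay g < P − 1, the optimal makespan is exactly (ℓ−1)·(1+g)+1, so the ratio OPT_CD / OPT_class equals (1+g) − g/ℓ and exceeds (1+g) − ε for every ε > 0 when ℓ is large enough. -/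
/-- Edge relation of the fully-connected layered DAG of length `l` and width `k`. -/
def layeredEdge (l k : ℕ) (u v : Fin l × Fin k) : Prop :=
  (v.1 : ℕ) = (u.1 : ℕ) + 1

/-- Communication-delay schedule validity. -/
def commDelayValid {V : Type} {P : ℕ} (E : V → V → Prop) (g : ℕ)
    (pi : V → Fin P) (t : V → ℕ) : Prop :=
  (∀ v, 1 ≤ t v) ∧ Function.Injective (fun v => (pi v, t v)) ∧
  (∀ u v, E u v → t u < t v ∧ (pi u ≠ pi v → t u + g < t v))

/-- For the fully-connected layered DAG of width `k` and length `l` in the commdelay model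
with `P = k` processors and delay `g < P − 1`, the optimal makespan is exactly
`(l−1)·(1+g)+1`; since `OPT_class = l`, the ratio `OPT_CD / OPT_class = (1+g) − g/l`
exceeds `(1+g) − ε` for every `ε > 0` once `l` is large enough. -/
theorem layered_dag_commdelay_opt (k g : ℕ) (hg : g + 1 < k) :
    (∀ l : ℕ, 0 < l →
      (∃ (pi : Fin l × Fin k → Fin k) (t : Fin l × Fin k → ℕ),
        commDelayValid (layeredEdge l k) g pi t ∧ ∀ v, t v ≤ (l - 1) * (1 + g) + 1) ∧
      (∀ (pi : Fin l × Fin k → Fin k) (t : Fin l × Fin k → ℕ),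
        commDelayValid (layeredEdge l k) g pi t →
          (l - 1) * (1 + g) + 1 ≤ Finset.univ.sup t)) ∧
    (∀ ε : ℝ, 0 < ε → ∃ l0 : ℕ, ∀ l : ℕ, l0 ≤ l →
      ((1 : ℝ) + g) - ε < (((l - 1 : ℕ) * (1 + g) + 1 : ℕ) : ℝ) / (l : ℝ)) := by
  have hk : 0 < k := by omega
  constructor
  · intro l hl
    constructor
    · -- upper bound schedule
      refine ⟨fun v => v.2, fun v => (v.1 : ℕ) * (1 + g) + 1, ⟨?_, ?_, ?_⟩, ?_⟩
      · intro v; dsimp only; omega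
      · intro u v h
        simp only [Prod.mk.injEq] at h
        have h1 : (u.1 : ℕ) * (1 + g) = (v.1 : ℕ) * (1 + g) := by omega
        have : (u.1 : ℕ) = (v.1 : ℕ) := by
          exact Nat.eq_of_mul_eq_mul_right (by omega) h1
        exact Prod.ext (Fin.ext this) h.1
      · intro u v huv
        unfold layeredEdge at huv
        dsimp only
        constructor
        · have : (v.1 : ℕ) * (1 + g) = (u.1 : ℕ) * (1 + g) + (1 + g) := by
            rw [huv]; ring
          omega
        · intro _
          have : (v.1 : ℕ) * (1 + g) = (u.1 : ℕ) * (1 + g) + (1 + g) := by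
            rw [huv]; ring
          omega
      · intro v
        dsimp only
        have h1 : (v.1 : ℕ) ≤ l - 1 := by have := v.1.isLt; omega
        have := Nat.mul_le_mul_right (1 + g) h1
        omega
    · -- lower bound
      rintro pi t ⟨ht1, hinj, hE⟩
      have key : ∀ i : ℕ, ∀ hi : i < l, ∃ j : Fin k,
          i * (1 + g) + 1 ≤ t (⟨i, hi⟩, j) := by
        intro i
        induction i with
        | zero => intro hi; exact ⟨⟨0, hk⟩, by simpa using ht1 _⟩
        | succ i ih =>
          intro hi
          obtain ⟨j, hj⟩ := ih (by omega)
          have hring : (i + 1) * (1 + g) = i * (1 + g) + (1 + g) := by ring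
          set u : Fin l × Fin k := (⟨i, by omega⟩, j) with hu
          by_contra hcon
          push_neg at hcon
          -- every node in layer i+1 has time ≤ t u + g and hence same processor as u
          have hedge : ∀ j' : Fin k, layeredEdge l k u (⟨i + 1, hi⟩, j') := by
            intro j'; rfl
          have hsame : ∀ j' : Fin k, pi (⟨i + 1, hi⟩, j') = pi u := by
            intro j'
            by_contra hne
            have := (hE u (⟨i + 1, hi⟩, j') (hedge j')).2 (Ne.symm hne)
            have := hcon j'
            omega
          have hmem : ∀ j' : Fin k,
              t (⟨i + 1, hi⟩, j') ∈ Finset.Ioc (t u) (t u + g) := by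
            intro j'
            have h1 := (hE u (⟨i + 1, hi⟩, j') (hedge j')).1
            have h2 := hcon j'
            simp only [Finset.mem_Ioc]
            omega
          have hinj' : Set.InjOn (fun j' : Fin k => t (⟨i + 1, hi⟩, j'))
              (Finset.univ : Finset (Fin k)) := by
            intro a _ b _ hab
            have : (pi (⟨i + 1, hi⟩, a), t (⟨i + 1, hi⟩, a))
                 = (pi (⟨i + 1, hi⟩, b), t (⟨i + 1, hi⟩, b)) := by
              rw [hsame a, hsame b]; simp [hab]
            have := hinj this
            simpa using this
          have hcard := Finset.card_le_card_of_injOn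
            (fun j' : Fin k => t (⟨i + 1, hi⟩, j'))
            (fun j' _ => hmem j') hinj'
          simp [Nat.card_Ioc] at hcard
          omega
      obtain ⟨j, hj⟩ := key (l - 1) (by omega)
      calc (l - 1) * (1 + g) + 1 ≤ t (⟨l - 1, by omega⟩, j) := hj
        _ ≤ Finset.univ.sup t := Finset.le_sup (Finset.mem_univ _)
  · -- asymptotic ratio
    intro ε hε
    obtain ⟨l0, hl0⟩ := exists_nat_gt ((g : ℝ) / ε)
    refine ⟨max l0 1, fun l hl => ?_⟩
    have hl1 : 1 ≤ l := le_trans (le_max_right _ _) hl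
    have hll0 : l0 ≤ l := le_trans (le_max_left _ _) hl
    have hlpos : (0 : ℝ) < l := by exact_mod_cast hl1
    obtain ⟨m, rfl⟩ : ∃ m, l = m + 1 := ⟨l - 1, by omega⟩
    have hval : ((m + 1 - 1 : ℕ) * (1 + g) + 1 : ℕ) = (m + 1) * (1 + g) - g := by
      have h2 : (m + 1) * (1 + g) = m * (1 + g) + (1 + g) := by ring
      simp only [Nat.add_sub_cancel]
      omega
    rw [hval]
    have hcast : (((m + 1) * (1 + g) - g : ℕ) : ℝ) = ((m + 1 : ℕ) : ℝ) * (1 + g) - g := by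
      have hle : g ≤ (m + 1) * (1 + g) := by
        have h2 : (m + 1) * (1 + g) = m * (1 + g) + (1 + g) := by ring
        omega
      push_cast [hle]
      ring
    rw [hcast]
    have hgl : (g : ℝ) < ε * ((m + 1 : ℕ) : ℝ) := by
      have h1 : (g : ℝ) / ε < ((m + 1 : ℕ) : ℝ) := lt_of_lt_of_le hl0 (by exact_mod_cast hll0)
      have := (div_lt_iff₀ hε).mp h1
      nlinarith
    rw [lt_div_iff₀ hlpos]
    push_cast at hgl ⊢
    nlinarith
end

section
/- For any DAG and parameters P and g, the optimal BSP cost (with latency L = 0) is at most twice the optimal makespan in the single-port duplex (SPD) model: OPT_BSP ≤ 2·OPT_SPD. -/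
section BSP

variable {V : Type} [Fintype V] [DecidableEq V]

/-- Work cost of superstep `s`: the maximum over processors of the number of nodes
computed on that processor in superstep `s`. -/
def bspWork {P : ℕ} (pi : V → Fin P) (tau : V → ℕ) (s : ℕ) : ℕ :=
  Finset.univ.sup fun p : Fin P =>
    (Finset.univ.filter (fun v : V => pi v = p ∧ tau v = s)).card

/-- Communication (h-relation) cost of superstep `s`: the maximum over processors of the
larger of the number of values sent and received by that processor in superstep `s`. -/
def bspCommCost {P : ℕ} (Γ : Finset (V × Fin P × Fin P × ℕ)) (s : ℕ) : ℕ :=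
  Finset.univ.sup fun p : Fin P =>
    max ((Γ.filter (fun x => x.2.1 = p ∧ x.2.2.2 = s)).card)
        ((Γ.filter (fun x => x.2.2.1 = p ∧ x.2.2.2 = s)).card)

/-- Total BSP cost with latency `L = 0`: sum over supersteps of work plus `g` times the
h-relation. -/
def bspCost {P : ℕ} (pi : V → Fin P) (tau : V → ℕ)
    (Γ : Finset (V × Fin P × Fin P × ℕ)) (g S : ℕ) : ℕ :=
  ∑ s ∈ Finset.Icc 1 S, (bspWork pi tau s + g * bspCommCost Γ s)

/-- Validity of a BSP schedule with `S` supersteps for the DAG `(V, E)`. -/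
def bspValid (E : V → V → Prop) {P : ℕ} (S : ℕ) (pi : V → Fin P) (tau : V → ℕ)
    (Γ : Finset (V × Fin P × Fin P × ℕ)) : Prop :=
  (∀ v, 1 ≤ tau v ∧ tau v ≤ S) ∧
  (∀ x ∈ Γ, 1 ≤ x.2.2.2 ∧ x.2.2.2 ≤ S ∧ x.2.1 = pi x.1 ∧ tau x.1 ≤ x.2.2.2) ∧
  (∀ u v, E u v → (pi u = pi v → tau u ≤ tau v) ∧
    (pi u ≠ pi v → ∃ s, (u, pi u, pi v, s) ∈ Γ ∧ s < tau v))

/-- Validity of a single-port duplex (SPD) schedule: each processor computes at most one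
node per time unit; each communication `(v, p1, p2, t0)` sends the already-computed value
of `v` from `p1 = π(v)` during `(t0, t0+g]`, and intersecting communication intervals have
distinct senders and distinct receivers; every cross-processor edge `(u,v)` has a transfer
of `u` to `π(v)` finishing before `t(v)`. -/
def spdValid (E : V → V → Prop) {P : ℕ} (g : ℕ) (pi : V → Fin P) (t : V → ℕ)
    (Γ : Finset (V × Fin P × Fin P × ℕ)) : Prop :=
  (∀ v, 1 ≤ t v) ∧ Function.Injective (fun v => (pi v, t v)) ∧
  (∀ x ∈ Γ, x.2.1 = pi x.1 ∧ t x.1 ≤ x.2.2.2) ∧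
  (∀ x ∈ Γ, ∀ y ∈ Γ, x ≠ y →
    (x.2.2.2 < y.2.2.2 + g ∧ y.2.2.2 < x.2.2.2 + g) →
      x.2.1 ≠ y.2.1 ∧ x.2.2.1 ≠ y.2.2.1) ∧
  (∀ u v, E u v → (pi u = pi v → t u < t v) ∧
    (pi u ≠ pi v → ∃ t0, (u, pi u, pi v, t0) ∈ Γ ∧ t0 + g < t v))

/-- Ceiling division shifted so that `cdiv g n` is the superstep containing time `n`. -/
private def cdiv (g n : ℕ) : ℕ := (n - 1) / g + 1

private lemma cdiv_pos (g n : ℕ) : 1 ≤ cdiv g n := Nat.le_add_left 1 _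

private lemma cdiv_mono {g : ℕ} : Monotone (cdiv g) := fun a b h =>
  Nat.add_le_add_right (Nat.div_le_div_right (Nat.sub_le_sub_right h 1)) 1

private lemma cdiv_add_g {g n : ℕ} (hg : 0 < g) (hn : 1 ≤ n) :
    cdiv g (n + g) = cdiv g n + 1 := by
  unfold cdiv
  have h : n + g - 1 = (n - 1) + g := by omega
  rw [h, Nat.add_div_right _ hg]

private lemma cdiv_lb {g n : ℕ} (hn : 1 ≤ n) : (cdiv g n - 1) * g < n := by
  unfold cdiv
  rw [Nat.add_sub_cancel]
  exact lt_of_le_of_lt (Nat.div_mul_le_self _ _) (by omega)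

private lemma cdiv_ub {g n : ℕ} (hg : 0 < g) (hn : 1 ≤ n) : n ≤ cdiv g n * g := by
  unfold cdiv
  have h1 := Nat.div_add_mod (n - 1) g
  have h2 : (n - 1) % g < g := Nat.mod_lt _ hg
  rw [Nat.add_mul, one_mul, Nat.mul_comm]
  set m := g * ((n - 1) / g) with hm
  omega

private lemma cdiv_close {g a b : ℕ} (hg : 0 < g) (ha : 1 ≤ a) (hb : 1 ≤ b)
    (h : cdiv g a = cdiv g b) : a < b + g ∧ b < a + g := by
  have hsa : cdiv g a * g = (cdiv g a - 1) * g + g := by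
    have h1 : cdiv g a - 1 + 1 = cdiv g a := Nat.succ_pred_eq_of_pos (cdiv_pos _ _)
    calc cdiv g a * g = (cdiv g a - 1 + 1) * g := by rw [h1]
      _ = (cdiv g a - 1) * g + g := by rw [Nat.add_mul, one_mul]
  have hsb : cdiv g b * g = (cdiv g b - 1) * g + g := by
    have h1 : cdiv g b - 1 + 1 = cdiv g b := Nat.succ_pred_eq_of_pos (cdiv_pos _ _)
    calc cdiv g b * g = (cdiv g b - 1 + 1) * g := by rw [h1]
      _ = (cdiv g b - 1) * g + g := by rw [Nat.add_mul, one_mul]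
  constructor
  · calc a ≤ cdiv g a * g := cdiv_ub hg ha
      _ = (cdiv g b - 1) * g + g := by rw [h]; exact hsb
      _ < b + g := Nat.add_lt_add_right (cdiv_lb hb) g
  · calc b ≤ cdiv g b * g := cdiv_ub hg hb
      _ = (cdiv g a - 1) * g + g := by rw [← h]; exact hsa
      _ < a + g := Nat.add_lt_add_right (cdiv_lb ha) g

private lemma work_le_one {P : ℕ} (pi : V → Fin P) (t : V → ℕ)
    (hinj : Function.Injective fun v => (pi v, t v)) (s : ℕ) :
    bspWork pi t s ≤ 1 := by
  apply Finset.sup_le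
  intro p _
  apply Finset.card_le_one.mpr
  intro a ha b hb
  simp only [Finset.mem_filter, Finset.mem_univ, true_and] at ha hb
  apply hinj
  show (pi a, t a) = (pi b, t b)
  rw [ha.1, hb.1, ha.2, hb.2]

private lemma sum_min_le (g T S : ℕ) :
    ∑ s ∈ Finset.Icc 1 S, (min (s * g) T - (s - 1) * g) ≤ T := by
  have hmono : Monotone (fun i : ℕ => min (i * g) T) := fun a b h =>
    min_le_min (Nat.mul_le_mul_right g h) le_rfl
  calc ∑ s ∈ Finset.Icc 1 S, (min (s * g) T - (s - 1) * g)
      = ∑ i ∈ Finset.range S, (min ((1 + i) * g) T - (1 + i - 1) * g) := by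
        rw [← Finset.Ico_add_one_right_eq_Icc, Finset.sum_Ico_eq_sum_range]
        simp
    _ ≤ ∑ i ∈ Finset.range S, ((fun i : ℕ => min (i * g) T) (i + 1) -
          (fun i : ℕ => min (i * g) T) i) := by
        apply Finset.sum_le_sum
        intro i _
        simp only []
        have h1 : (1 + i) * g = (i + 1) * g := by ring
        have h2 : (1 + i - 1) * g = i * g := by simp
        rw [h1, h2]
        exact Nat.sub_le_sub_left (min_le_left _ _) _
    _ = min (S * g) T - min (0 * g) T := Finset.sum_range_tsub hmono S
    _ ≤ T := by simp

/-- For any DAG and parameters `P` and `g`, the optimal BSP cost (with latency `L = 0`) is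
at most twice the optimal SPD makespan: any valid SPD schedule of makespan at most `T`
yields a valid BSP schedule of total cost at most `2·T`. -/
theorem bsp_opt_le_two_spd_opt (E : V → V → Prop) (P g : ℕ)
    (pi : V → Fin P) (t : V → ℕ) (Γ : Finset (V × Fin P × Fin P × ℕ))
    (hvalid : spdValid E g pi t Γ) (T : ℕ) (hT : ∀ v, t v ≤ T) :
    ∃ (S : ℕ) (pi' : V → Fin P) (tau : V → ℕ)
      (Γ' : Finset (V × Fin P × Fin P × ℕ)),
      bspValid E S pi' tau Γ' ∧ bspCost pi' tau Γ' g S ≤ 2 * T := by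
  obtain ⟨ht1, hinj, hΓmem, hov, hE⟩ := hvalid
  rcases Nat.eq_zero_or_pos g with hg | hg
  · -- g = 0 : use the SPD schedule directly, one time unit per superstep.
    subst hg
    refine ⟨T, pi, t, Γ.filter (fun x => x.2.2.2 ≤ T), ⟨?_, ?_, ?_⟩, ?_⟩
    · exact fun v => ⟨ht1 v, hT v⟩
    · intro x hx
      rw [Finset.mem_filter] at hx
      obtain ⟨hp, hle⟩ := hΓmem x hx.1
      exact ⟨le_trans (ht1 x.1) hle, hx.2, hp, hle⟩
    · intro u v huv
      obtain ⟨hsame, hcross⟩ := hE u v huv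
      refine ⟨fun h => (hsame h).le, fun h => ?_⟩
      obtain ⟨t0, ht0, hlt⟩ := hcross h
      rw [Nat.add_zero] at hlt
      exact ⟨t0, Finset.mem_filter.mpr ⟨ht0, le_trans hlt.le (hT v)⟩, hlt⟩
    · unfold bspCost
      calc ∑ s ∈ Finset.Icc 1 T, (bspWork pi t s + 0 * bspCommCost _ s)
          ≤ ∑ _s ∈ Finset.Icc 1 T, 1 :=
            Finset.sum_le_sum (fun s _ => by
              simpa using work_le_one pi t hinj s)
        _ = T := by simp
        _ ≤ 2 * T := by omega
  · -- g ≥ 1 : supersteps are time intervals of length g.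
    set S := cdiv g T with hS
    set tau : V → ℕ := fun v => cdiv g (t v) with htau
    set Γ' := (Γ.filter (fun x => x.2.2.2 + g ≤ T)).image
        (fun x => (x.1, x.2.1, x.2.2.1, cdiv g x.2.2.2)) with hΓ'
    -- membership characterization for Γ'
    have hmem' : ∀ x' ∈ Γ', ∃ x ∈ Γ, x.2.2.2 + g ≤ T ∧
        x' = (x.1, x.2.1, x.2.2.1, cdiv g x.2.2.2) := by
      intro x' hx'
      rw [hΓ', Finset.mem_image] at hx'
      obtain ⟨x, hx, hmap⟩ := hx'
      rw [Finset.mem_filter] at hx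
      exact ⟨x, hx.1, hx.2, hmap.symm⟩
    have ht0pos : ∀ x ∈ Γ, 1 ≤ x.2.2.2 := fun x hx =>
      le_trans (ht1 x.1) (hΓmem x hx).2
    -- every communication in Γ' happens strictly before superstep S
    have hstep : ∀ x' ∈ Γ', x'.2.2.2 < S := by
      intro x' hx'
      obtain ⟨x, hx, hfit, rfl⟩ := hmem' x' hx'
      show cdiv g x.2.2.2 < S
      have h1 : cdiv g x.2.2.2 + 1 = cdiv g (x.2.2.2 + g) :=
        (cdiv_add_g hg (ht0pos x hx)).symm
      have h2 : cdiv g (x.2.2.2 + g) ≤ S := hS ▸ cdiv_mono hfit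
      omega
    refine ⟨S, pi, tau, Γ', ⟨?_, ?_, ?_⟩, ?_⟩
    · -- tau bounds
      intro v
      exact ⟨cdiv_pos g (t v), hS ▸ cdiv_mono (hT v)⟩
    · -- Γ' entries well-formed
      intro x' hx'
      have hlt := hstep x' hx'
      obtain ⟨x, hx, hfit, rfl⟩ := hmem' x' hx'
      obtain ⟨hp, hle⟩ := hΓmem x hx
      exact ⟨cdiv_pos g _, le_of_lt hlt, hp, cdiv_mono hle⟩
    · -- edge conditions
      intro u v huv
      obtain ⟨hsame, hcross⟩ := hE u v huv
      refine ⟨fun h => cdiv_mono (hsame h).le, fun h => ?_⟩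
      obtain ⟨t0, ht0, hlt⟩ := hcross h
      have ht0p : 1 ≤ t0 := ht0pos _ ht0
      have hfit : t0 + g ≤ T := le_trans hlt.le (hT v)
      refine ⟨cdiv g t0, ?_, ?_⟩
      · rw [hΓ', Finset.mem_image]
        exact ⟨(u, pi u, pi v, t0), Finset.mem_filter.mpr ⟨ht0, hfit⟩, rfl⟩
      · show cdiv g t0 < cdiv g (t v)
        have h1 : cdiv g t0 + 1 = cdiv g (t0 + g) := (cdiv_add_g hg ht0p).symm
        have h2 : cdiv g (t0 + g) ≤ cdiv g (t v) := cdiv_mono hlt.le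
        omega
    · -- cost bound
      -- work bound per superstep
      have hwork : ∀ s : ℕ, bspWork pi tau s ≤ min (s * g) T - (s - 1) * g := by
        intro s
        apply Finset.sup_le
        intro p _
        rw [← Nat.card_Ioc ((s - 1) * g) (min (s * g) T)]
        apply Finset.card_le_card_of_injOn (fun v => t v)
        · intro v hv
          simp only [Finset.mem_coe, Finset.mem_filter, Finset.mem_univ, true_and, htau] at hv
          rw [Finset.mem_coe, Finset.mem_Ioc]
          have h1 : (cdiv g (t v) - 1) * g < t v := cdiv_lb (ht1 v)
          have h2 : t v ≤ cdiv g (t v) * g := cdiv_ub hg (ht1 v)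
          rw [hv.2] at h1 h2
          exact ⟨h1, le_min h2 (hT v)⟩
        · intro a ha b hb hab
          simp only [Finset.coe_filter, Set.mem_setOf_eq, Finset.mem_univ,
            true_and] at ha hb
          apply hinj
          show (pi a, t a) = (pi b, t b)
          rw [ha.1, hb.1]
          exact congrArg _ hab
      -- comm bound per superstep
      have hcomm1 : ∀ s : ℕ, bspCommCost Γ' s ≤ 1 := by
        intro s
        apply Finset.sup_le
        intro p _
        apply max_le
        · apply Finset.card_le_one.mpr
          intro a ha b hb
          rw [Finset.mem_filter] at ha hb
          obtain ⟨xa, hxa, hfa, rfl⟩ := hmem' a ha.1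
          obtain ⟨xb, hxb, hfb, rfl⟩ := hmem' b hb.1
          by_cases hxab : xa = xb
          · rw [hxab]
          · exfalso
            have hclose := cdiv_close hg (ht0pos xa hxa) (ht0pos xb hxb)
              (ha.2.2.trans hb.2.2.symm)
            exact (hov xa hxa xb hxb hxab hclose).1 (ha.2.1.trans hb.2.1.symm)
        · apply Finset.card_le_one.mpr
          intro a ha b hb
          rw [Finset.mem_filter] at ha hb
          obtain ⟨xa, hxa, hfa, rfl⟩ := hmem' a ha.1
          obtain ⟨xb, hxb, hfb, rfl⟩ := hmem' b hb.1
          by_cases hxab : xa = xb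
          · rw [hxab]
          · exfalso
            have hclose := cdiv_close hg (ht0pos xa hxa) (ht0pos xb hxb)
              (ha.2.2.trans hb.2.2.symm)
            exact (hov xa hxa xb hxb hxab hclose).2 (ha.2.1.trans hb.2.1.symm)
      -- no communication in superstep S
      have hcommS : bspCommCost Γ' S = 0 := by
        apply Nat.le_zero.mp
        apply Finset.sup_le
        intro p _
        apply max_le <;>
        · apply Nat.le_zero.mpr
          rw [Finset.card_eq_zero, Finset.filter_eq_empty_iff]
          intro x hx hc
          exact absurd hc.2 (Nat.ne_of_lt (hstep x hx))
      have hS1 : 1 ≤ S := cdiv_pos g T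
      -- sum the two parts
      have hsplit : bspCost pi tau Γ' g S =
          (∑ s ∈ Finset.Icc 1 S, bspWork pi tau s) +
          (∑ s ∈ Finset.Icc 1 S, g * bspCommCost Γ' s) := by
        unfold bspCost
        rw [Finset.sum_add_distrib]
      have hw : (∑ s ∈ Finset.Icc 1 S, bspWork pi tau s) ≤ T :=
        le_trans (Finset.sum_le_sum (fun s _ => hwork s)) (sum_min_le g T S)
      have hc : (∑ s ∈ Finset.Icc 1 S, g * bspCommCost Γ' s) ≤ T := by
        have hsum : ∑ s ∈ Finset.Icc 1 S, g * bspCommCost Γ' s =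
            (∑ s ∈ Finset.Icc 1 (S - 1), g * bspCommCost Γ' s) +
              g * bspCommCost Γ' S := by
          have h : S = (S - 1) + 1 := by omega
          rw [h, Finset.sum_Icc_succ_top (by omega), ← h]
        rw [hsum, hcommS, Nat.mul_zero, Nat.add_zero]
        calc ∑ s ∈ Finset.Icc 1 (S - 1), g * bspCommCost Γ' s
            ≤ ∑ _s ∈ Finset.Icc 1 (S - 1), g :=
              Finset.sum_le_sum (fun s _ => by
                calc g * bspCommCost Γ' s ≤ g * 1 :=
                      Nat.mul_le_mul_left g (hcomm1 s)
                  _ = g := Nat.mul_one g)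
          _ = (S - 1) * g := by simp [Nat.card_Icc, Nat.mul_comm]
          _ = (T - 1) / g * g := by rw [hS]; unfold cdiv; rw [Nat.add_sub_cancel]
          _ ≤ T - 1 := Nat.div_mul_le_self _ _
          _ ≤ T := Nat.sub_le _ _
      rw [hsplit]
      omega

end BSP
end

section
/- Duplication can strictly reduce the optimal cost in the BSP model: for the DAG consisting of a source node v0 with edges to the first nodes of two disjoint directed paths of length ℓ each, with P = 2 processors, g ≥ 1, L = 0, and ℓ ≥ 2g+2, the optimal BSP cost without duplication is at least ℓ + 1 + g, whereas with duplication of v0 on both processors a cost of ℓ + 1 is achievable. -/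
section BSP

variable {V : Type} [Fintype V] [DecidableEq V]

/-- Work cost of superstep `s` when duplication is allowed: `X v` is the set of
`(processor, superstep)` pairs at which `v` is computed. -/
def bspWorkDup {P : ℕ} (X : V → Finset (Fin P × ℕ)) (s : ℕ) : ℕ :=
  Finset.univ.sup fun p : Fin P =>
    ∑ v : V, if (p, s) ∈ X v then 1 else 0

/-- Total BSP cost with duplication, latency `L = 0`. -/
def bspCostDup {P : ℕ} (X : V → Finset (Fin P × ℕ))
    (Γ : Finset (V × Fin P × Fin P × ℕ)) (g S : ℕ) : ℕ :=
  ∑ s ∈ Finset.Icc 1 S, (bspWorkDup X s + g * bspCommCost Γ s)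

/-- Validity of a BSP schedule with duplication. -/
def bspValidDup (E : V → V → Prop) {P : ℕ} (S : ℕ) (X : V → Finset (Fin P × ℕ))
    (Γ : Finset (V × Fin P × Fin P × ℕ)) : Prop :=
  (∀ v, (X v).Nonempty ∧ ∀ e ∈ X v, 1 ≤ e.2 ∧ e.2 ≤ S) ∧
  (∀ x ∈ Γ, 1 ≤ x.2.2.2 ∧ x.2.2.2 ≤ S ∧
    ∃ s' ≤ x.2.2.2, (x.2.1, s') ∈ X x.1) ∧
  (∀ u v, E u v → ∀ e ∈ X v,
    (∃ s' ≤ e.2, (e.1, s') ∈ X u) ∨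
    (∃ p1 s'', (u, p1, e.1, s'') ∈ Γ ∧ s'' < e.2))

end BSP

/-- The fork DAG: node `0` is the source `v0`, nodes `1..l` form one directed chain and
nodes `l+1..2l` the other, with edges from `v0` to the first node of each chain. -/
def forkEdge (l : ℕ) (u v : Fin (2 * l + 1)) : Prop :=
  ((u : ℕ) = 0 ∧ ((v : ℕ) = 1 ∨ (v : ℕ) = l + 1)) ∨
  (1 ≤ (u : ℕ) ∧ (u : ℕ) < l ∧ (v : ℕ) = (u : ℕ) + 1) ∨
  (l + 1 ≤ (u : ℕ) ∧ (u : ℕ) < 2 * l ∧ (v : ℕ) = (u : ℕ) + 1)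

/-- The schedule with duplication: `v0` on both processors at step 1, chain nodes in order. -/
def forkX (l : ℕ) (v : Fin (2 * l + 1)) : Finset (Fin 2 × ℕ) :=
  if (v : ℕ) = 0 then {((0 : Fin 2), 1), ((1 : Fin 2), 1)}
  else if (v : ℕ) ≤ l then {((0 : Fin 2), (v : ℕ) + 1)}
  else {((1 : Fin 2), (v : ℕ) - l + 1)}

lemma forkX_mem {l : ℕ} {v : Fin (2 * l + 1)} {p : Fin 2} {s : ℕ}
    (h : (p, s) ∈ forkX l v) :
    ((v : ℕ) = 0 ∧ s = 1) ∨
    ((1 ≤ (v : ℕ) ∧ (v : ℕ) ≤ l) ∧ p = 0 ∧ s = (v : ℕ) + 1) ∨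
    (l + 1 ≤ (v : ℕ) ∧ p = 1 ∧ s = (v : ℕ) - l + 1) := by
  unfold forkX at h
  split_ifs at h with h1 h2
  · simp only [Finset.mem_insert, Finset.mem_singleton, Prod.mk.injEq] at h
    rcases h with ⟨_, h⟩ | ⟨_, h⟩ <;> exact Or.inl ⟨h1, h⟩
  · simp only [Finset.mem_singleton, Prod.mk.injEq] at h
    exact Or.inr (Or.inl ⟨⟨by omega, h2⟩, h.1, h.2⟩)
  · simp only [Finset.mem_singleton, Prod.mk.injEq] at h
    exact Or.inr (Or.inr ⟨by omega, h.1, h.2⟩)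

lemma forkX_unique {l : ℕ} {a b : Fin (2 * l + 1)} {p : Fin 2} {s : ℕ}
    (ha : (p, s) ∈ forkX l a) (hb : (p, s) ∈ forkX l b) : a = b := by
  rcases forkX_mem ha with ⟨h1, h2⟩ | ⟨h1, h2, h3⟩ | ⟨h1, h2, h3⟩ <;>
    rcases forkX_mem hb with ⟨g1, g2⟩ | ⟨g1, g2, g3⟩ | ⟨g1, g2, g3⟩ <;>
      first
        | (apply Fin.ext; omega)
        | (exfalso; omega)
        | (exact absurd (h2.symm.trans g2) (by decide))


/-- Duplication can strictly reduce the optimal BSP cost: for the fork DAG (a source `v0`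
with edges to two disjoint directed paths of length `l`), `P = 2` processors, `g ≥ 1` and
`L = 0`, if `l ≥ 2g+2` then every duplication-free BSP schedule costs at least `l + 1 + g`,
while duplicating `v0` on both processors achieves cost at most `l + 1`. -/
theorem duplication_helps_in_bsp (l g : ℕ) (hg : 1 ≤ g) (hl : 2 * g + 2 ≤ l) :
    (∀ (S : ℕ) (pi : Fin (2 * l + 1) → Fin 2) (tau : Fin (2 * l + 1) → ℕ)
        (Γ : Finset (Fin (2 * l + 1) × Fin 2 × Fin 2 × ℕ)),
      bspValid (forkEdge l) S pi tau Γ →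
        l + 1 + g ≤ bspCost pi tau Γ g S) ∧
    (∃ (S : ℕ) (X : Fin (2 * l + 1) → Finset (Fin 2 × ℕ))
        (Γ : Finset (Fin (2 * l + 1) × Fin 2 × Fin 2 × ℕ)),
      bspValidDup (forkEdge l) S X Γ ∧ bspCostDup X Γ g S ≤ l + 1) := by
  have hl1 : 1 ≤ l := by omega
  constructor
  · intro S pi tau Γ hv
    obtain ⟨htau, hΓ, hE⟩ := hv
    have factA : ∀ p : Fin 2,
        (Finset.univ.filter fun v : Fin (2 * l + 1) => pi v = p).card
          = ∑ s ∈ Finset.Icc 1 S,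
              (Finset.univ.filter fun v : Fin (2 * l + 1) => pi v = p ∧ tau v = s).card := by
      intro p
      rw [Finset.card_eq_sum_card_fiberwise
        (f := tau) (t := Finset.Icc 1 S)
        (fun v _ => Finset.mem_Icc.mpr ⟨(htau v).1, (htau v).2⟩)]
      exact Finset.sum_congr rfl fun s _ => by rw [Finset.filter_filter]
    have hwork : ∀ p : Fin 2,
        (Finset.univ.filter fun v : Fin (2 * l + 1) => pi v = p).card
          ≤ ∑ s ∈ Finset.Icc 1 S, bspWork pi tau s := by
      intro p
      rw [factA p]
      exact Finset.sum_le_sum fun s _ =>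
        Finset.le_sup (f := fun p : Fin 2 =>
          (Finset.univ.filter fun v : Fin (2 * l + 1) => pi v = p ∧ tau v = s).card)
          (Finset.mem_univ p)
    have factB : (Finset.univ.filter fun v : Fin (2 * l + 1) => pi v = 0).card
        + (Finset.univ.filter fun v : Fin (2 * l + 1) => pi v = 1).card = 2 * l + 1 := by
      have h := Finset.card_eq_sum_card_fiberwise
        (f := pi) (s := (Finset.univ : Finset (Fin (2 * l + 1)))) (t := Finset.univ)
        (fun v _ => Finset.mem_univ _)
      rw [Fin.sum_univ_two] at h
      simpa using h.symm
    have hsplit : bspCost pi tau Γ g S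
        = (∑ s ∈ Finset.Icc 1 S, bspWork pi tau s)
          + g * ∑ s ∈ Finset.Icc 1 S, bspCommCost Γ s := by
      unfold bspCost
      rw [Finset.sum_add_distrib, Finset.mul_sum]
    by_cases hconst : ∀ w : Fin (2 * l + 1), pi w = pi ⟨0, by omega⟩
    · have hall : (Finset.univ.filter
          fun v : Fin (2 * l + 1) => pi v = pi ⟨0, by omega⟩).card = 2 * l + 1 := by
        rw [Finset.filter_true_of_mem (fun v _ => hconst v)]
        simp
      have h1 := hwork (pi ⟨0, by omega⟩)
      rw [hall] at h1
      omega
    · push_neg at hconst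
      obtain ⟨w0, hw0⟩ := hconst
      have cross : ∀ k : ℕ, ∀ hk : k < 2 * l + 1, pi ⟨k, hk⟩ ≠ pi ⟨0, by omega⟩ →
          ∃ u v : Fin (2 * l + 1), forkEdge l u v ∧ pi u ≠ pi v := by
        intro k
        induction k using Nat.strong_induction_on with
        | _ k ih =>
          intro hk hne
          rcases Nat.eq_zero_or_pos k with h0 | hpos
          · subst h0; exact absurd rfl hne
          · have hjlt : (if k = l + 1 then 0 else k - 1) < 2 * l + 1 := by split <;> omega
            have hedge : forkEdge l ⟨if k = l + 1 then 0 else k - 1, hjlt⟩ ⟨k, hk⟩ := by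
              show ((if k = l + 1 then 0 else k - 1) = 0 ∧ (k = 1 ∨ k = l + 1)) ∨
                (1 ≤ (if k = l + 1 then 0 else k - 1) ∧
                  (if k = l + 1 then 0 else k - 1) < l ∧
                  k = (if k = l + 1 then 0 else k - 1) + 1) ∨
                (l + 1 ≤ (if k = l + 1 then 0 else k - 1) ∧
                  (if k = l + 1 then 0 else k - 1) < 2 * l ∧
                  k = (if k = l + 1 then 0 else k - 1) + 1)
              split <;> omega
            by_cases hpj : pi ⟨if k = l + 1 then 0 else k - 1, hjlt⟩ = pi ⟨k, hk⟩
            · refine ih (if k = l + 1 then 0 else k - 1) (by split <;> omega) hjlt ?_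
              rw [hpj]; exact hne
            · exact ⟨_, _, hedge, hpj⟩
      obtain ⟨u, v, he, hpuv⟩ := cross w0.1 w0.2 hw0
      obtain ⟨s0, hs0Γ, _⟩ := (hE u v he).2 hpuv
      obtain ⟨hs0a, hs0b, -, -⟩ := hΓ _ hs0Γ
      have hcomm : 1 ≤ bspCommCost Γ s0 := by
        have h1 : 0 < (Γ.filter (fun x => x.2.2.1 = pi v ∧ x.2.2.2 = s0)).card :=
          Finset.card_pos.mpr ⟨_, Finset.mem_filter.mpr ⟨hs0Γ, rfl, rfl⟩⟩
        calc 1 ≤ max ((Γ.filter (fun x => x.2.1 = pi v ∧ x.2.2.2 = s0)).card)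
                  ((Γ.filter (fun x => x.2.2.1 = pi v ∧ x.2.2.2 = s0)).card) :=
              le_max_of_le_right h1
          _ ≤ bspCommCost Γ s0 :=
              Finset.le_sup (f := fun p : Fin 2 =>
                max ((Γ.filter (fun x => x.2.1 = p ∧ x.2.2.2 = s0)).card)
                    ((Γ.filter (fun x => x.2.2.1 = p ∧ x.2.2.2 = s0)).card))
                (Finset.mem_univ (pi v))
      have hcsum : g ≤ g * ∑ s ∈ Finset.Icc 1 S, bspCommCost Γ s := by
        calc g = g * 1 := (mul_one g).symm
          _ ≤ g * ∑ s ∈ Finset.Icc 1 S, bspCommCost Γ s := by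
              apply Nat.mul_le_mul_left
              exact le_trans hcomm (Finset.single_le_sum (fun i _ => Nat.zero_le _)
                (Finset.mem_Icc.mpr ⟨hs0a, hs0b⟩))
      have hp0 := hwork 0
      have hp1 := hwork 1
      omega
  · refine ⟨l + 1, forkX l, ∅, ⟨?_, ?_, ?_⟩, ?_⟩
    · intro v
      constructor
      · unfold forkX; split_ifs <;> simp
      · intro e he
        have hvlt := v.isLt
        rcases forkX_mem (p := e.1) (s := e.2) he with ⟨h1, h2⟩ | ⟨h1, h2, h3⟩ | ⟨h1, h2, h3⟩ <;>
          omega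
    · intro x hx; simp at hx
    · intro u v he e hee
      left
      have hq : ∀ q : Fin 2, q = 0 ∨ q = 1 := by decide
      rcases he with ⟨hu, hv⟩ | ⟨hu1, hu2, hv⟩ | ⟨hu1, hu2, hv⟩
      · -- u = v0
        have he2 : 1 ≤ e.2 := by
          rcases forkX_mem (p := e.1) (s := e.2) hee with ⟨h1, h2⟩ | ⟨h1, h2, h3⟩ | ⟨h1, h2, h3⟩ <;>
            omega
        refine ⟨1, he2, ?_⟩
        unfold forkX
        rw [if_pos hu]
        rcases hq e.1 with h | h <;> simp [h]
      · -- chain A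
        rcases forkX_mem (p := e.1) (s := e.2) hee with ⟨h1, h2⟩ | ⟨h1, h2, h3⟩ | ⟨h1, h2, h3⟩
        · omega
        · refine ⟨(u : ℕ) + 1, by omega, ?_⟩
          unfold forkX
          rw [if_neg (by omega), if_pos (by omega)]
          simp [h2]
        · omega
      · -- chain B
        rcases forkX_mem (p := e.1) (s := e.2) hee with ⟨h1, h2⟩ | ⟨h1, h2, h3⟩ | ⟨h1, h2, h3⟩
        · omega
        · omega
        · refine ⟨(u : ℕ) - l + 1, by omega, ?_⟩
          unfold forkX
          rw [if_neg (by omega), if_neg (by omega)]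
          simp [h2]
    · unfold bspCostDup
      have hcz : ∀ s, bspCommCost (∅ : Finset (Fin (2 * l + 1) × Fin 2 × Fin 2 × ℕ)) s = 0 := by
        intro s; unfold bspCommCost; simp
      have hwz : ∀ s, bspWorkDup (forkX l) s ≤ 1 := by
        intro s
        unfold bspWorkDup
        apply Finset.sup_le
        intro p _
        rw [← Finset.card_filter]
        exact Finset.card_le_one.mpr fun a ha b hb =>
          forkX_unique (Finset.mem_filter.mp ha).2 (Finset.mem_filter.mp hb).2
      calc ∑ s ∈ Finset.Icc 1 (l + 1), (bspWorkDup (forkX l) s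
              + g * bspCommCost (∅ : Finset (Fin (2 * l + 1) × Fin 2 × Fin 2 × ℕ)) s)
          ≤ ∑ _s ∈ Finset.Icc 1 (l + 1), 1 :=
            Finset.sum_le_sum fun s _ => by rw [hcz]; simpa using hwz s
        _ = l + 1 := by simp [Nat.card_Icc]
end

section
/- The total communication cost in an optimal BSP schedule for a chain DAG is at most P − 1; more precisely, every chain DAG admits a BSP schedule (with L = 0) of total cost at most max(n/P, ℓ_max) + (P−1)·g, where ℓ_max is the length of the longest chain. -/
/-- A chain DAG given as a disjoint union of `m` directed paths, the `i`-th of length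
`c i`: nodes are pairs `⟨i, a⟩` and edges go from `⟨i, a⟩` to `⟨i, a+1⟩`. -/
def chainEdge {m : ℕ} (c : Fin m → ℕ) (u v : (i : Fin m) × Fin (c i)) : Prop :=
  u.1 = v.1 ∧ (u.2 : ℕ) + 1 = (v.2 : ℕ)

namespace ChainBSPAux

variable {m : ℕ} (c : Fin m → ℕ) (W : ℕ)

def cc (j : ℕ) : ℕ := if h : j < m then c ⟨j, h⟩ else 0

def SS (k : ℕ) : ℕ := ∑ j ∈ Finset.range k, cc c j

def CI (x : ℕ) : ℕ := Nat.findGreatest (fun i => SS c i ≤ x) m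

def AA (p : ℕ) : ℕ :=
  if SS c (CI c (p * W)) < p * W then SS c (CI c (p * W) + 1) - p * W else 0

def BB (p : ℕ) : ℕ :=
  if (p + 1) * W < SS c m then (p + 1) * W - SS c (CI c ((p + 1) * W)) else 0

def tpos (v : (i : Fin m) × Fin (c i)) : ℕ := SS c v.1 + v.2

def sigma (v : (i : Fin m) × Fin (c i)) : ℕ :=
  if SS c v.1 < tpos c v / W * W then W - (c v.1 - v.2)
  else if (tpos c v / W + 1) * W < SS c v.1 + c v.1 then (v.2 : ℕ)
  else BB c W (tpos c v / W) + (tpos c v % W - AA c W (tpos c v / W))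

lemma SS_mono : Monotone (SS c) := fun a b h =>
  Finset.sum_le_sum_of_subset (Finset.range_subset_range.mpr h)

lemma SS_succ (i : ℕ) : SS c (i + 1) = SS c i + cc c i := Finset.sum_range_succ _ _

lemma cc_eq (i : Fin m) : cc c i = c i := by simp [cc, i.isLt]

lemma SS_succ' (i : Fin m) : SS c ((i : ℕ) + 1) = SS c i + c i := by
  rw [SS_succ, cc_eq]

lemma cc_le (hcW : ∀ i : Fin m, c i ≤ W) (j : ℕ) : cc c j ≤ W := by
  unfold cc; split
  · exact hcW _
  · exact Nat.zero_le _

lemma tpos_lt (v : (i : Fin m) × Fin (c i)) : tpos c v < SS c m := by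
  have h1 : tpos c v < SS c ((v.1 : ℕ) + 1) := by
    rw [SS_succ' c v.1]; exact Nat.add_lt_add_left v.2.isLt _
  exact lt_of_lt_of_le h1 (SS_mono c v.1.isLt)

lemma tpos_inj : Function.Injective (tpos c) := by
  rintro ⟨i, a⟩ ⟨j, b⟩ h
  simp only [tpos] at h
  have hkey : ∀ (i j : Fin m) (a : Fin (c i)) (b : Fin (c j)), (i : ℕ) < j →
      SS c i + (a : ℕ) = SS c j + b → False := by
    intro i j a b hij heq
    have h1 : SS c i + (a : ℕ) < SS c ((i : ℕ) + 1) := by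
      rw [SS_succ' c i]; exact Nat.add_lt_add_left a.isLt _
    have h2 : SS c ((i : ℕ) + 1) ≤ SS c j := SS_mono c hij
    omega
  have hij : (i : ℕ) = j := by
    rcases Nat.lt_trichotomy (i : ℕ) j with h' | h' | h'
    · exact absurd (hkey i j a b h' h) (by simp)
    · exact h'
    · exact absurd (hkey j i b a h' h.symm) (by simp)
  have hij' : i = j := Fin.ext hij
  subst hij'
  have : (a : ℕ) = b := by omega
  exact congrArg _ (Fin.ext this)

lemma CI_le (x : ℕ) : CI c x ≤ m := Nat.findGreatest_le _

lemma CI_spec1 (x : ℕ) : SS c (CI c x) ≤ x :=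
  Nat.findGreatest_spec (P := fun i => SS c i ≤ x) (Nat.zero_le m) (by simp [SS])

lemma CI_lt (x : ℕ) (hx : x < SS c m) : CI c x < m := by
  rcases Nat.lt_or_ge (CI c x) m with h | h
  · exact h
  · have h1 := CI_spec1 c x
    have h2 := CI_le c x
    have : CI c x = m := le_antisymm h2 h
    rw [this] at h1; omega

lemma CI_spec2 (x : ℕ) (hx : x < SS c m) : x < SS c (CI c x + 1) := by
  have h1 := CI_lt c x hx
  have h2 := Nat.findGreatest_is_greatest (P := fun i => SS c i ≤ x) (n := m)
    (k := CI c x + 1) (Nat.lt_succ_self _) h1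
  omega

lemma CI_eq (x i : ℕ) (h3 : i ≤ m) (h1 : SS c i ≤ x) (h2 : x < SS c (i + 1)) :
    CI c x = i := by
  refine le_antisymm ?_ (Nat.le_findGreatest h3 h1)
  by_contra hlt
  push_neg at hlt
  have hP : SS c (CI c x) ≤ x := CI_spec1 c x
  have : SS c (i + 1) ≤ SS c (CI c x) := SS_mono c hlt
  omega


section Main

lemma suffix_facts (v : (i : Fin m) × Fin (c i))
    (hcW : ∀ i : Fin m, c i ≤ W)
    (h : SS c v.1 < tpos c v / W * W) :
    sigma c W v + AA c W (tpos c v / W) = W + (tpos c v - tpos c v / W * W) ∧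
    tpos c v - tpos c v / W * W < AA c W (tpos c v / W) := by
  have hd := Nat.div_add_mod' (tpos c v) W
  have hsucc : SS c ((v.1 : ℕ) + 1) = SS c v.1 + c v.1 := SS_succ' c v.1
  have hts : tpos c v = SS c v.1 + (v.2 : ℕ) := rfl
  have ha : (v.2 : ℕ) < c v.1 := v.2.isLt
  have hcv := hcW v.1
  have hpw_le : tpos c v / W * W ≤ tpos c v := Nat.div_mul_le_self _ _
  have hCI : CI c (tpos c v / W * W) = v.1 :=
    CI_eq c _ _ (le_of_lt v.1.isLt) (le_of_lt h) (by omega)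
  have hAA : AA c W (tpos c v / W) = SS c ((v.1 : ℕ) + 1) - tpos c v / W * W := by
    unfold AA; rw [hCI, if_pos h]
  have hσ : sigma c W v = W - (c v.1 - v.2) := by unfold sigma; rw [if_pos h]
  constructor <;> omega

lemma nonsuffix_AA_le (v : (i : Fin m) × Fin (c i))
    (h1 : ¬ SS c v.1 < tpos c v / W * W) :
    AA c W (tpos c v / W) ≤ tpos c v - tpos c v / W * W := by
  unfold AA
  split
  case isTrue hg =>
    have hpw_le : tpos c v / W * W ≤ tpos c v := Nat.div_mul_le_self _ _
    have hpwn : tpos c v / W * W < SS c m := lt_of_le_of_lt hpw_le (tpos_lt c v)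
    have h2 := CI_spec2 c _ hpwn
    have h3 : CI c (tpos c v / W * W) + 1 ≤ (v.1 : ℕ) := by
      by_contra hcon
      push_neg at hcon
      have : SS c v.1 ≤ SS c (CI c (tpos c v / W * W)) := SS_mono c (by omega)
      omega
    have h4 : SS c (CI c (tpos c v / W * W) + 1) ≤ SS c v.1 := SS_mono c h3
    have hts : SS c (v.1 : ℕ) ≤ tpos c v := Nat.le_add_right _ _
    omega
  case isFalse h' => omega

lemma middle_rB (hW : 0 < W) (v : (i : Fin m) × Fin (c i))
    (h1 : ¬ SS c v.1 < tpos c v / W * W)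
    (h2 : ¬ (tpos c v / W + 1) * W < SS c v.1 + c v.1) :
    (tpos c v - tpos c v / W * W) + BB c W (tpos c v / W) < W := by
  have hd := Nat.div_add_mod' (tpos c v) W
  have hm := Nat.mod_lt (tpos c v) hW
  have hsm : (tpos c v / W + 1) * W = tpos c v / W * W + W := Nat.succ_mul _ _
  unfold BB
  split
  case isTrue hg =>
    have hs1 := CI_spec1 c ((tpos c v / W + 1) * W)
    have hs2 := CI_spec2 c _ hg
    have hsucc : SS c ((v.1 : ℕ) + 1) = SS c v.1 + c v.1 := SS_succ' c v.1
    have hts : tpos c v = SS c v.1 + (v.2 : ℕ) := rfl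
    have ha : (v.2 : ℕ) < c v.1 := v.2.isLt
    rcases eq_or_lt_of_le hs1 with he | hlt
    · omega
    · have hij : (v.1 : ℕ) + 1 ≤ CI c ((tpos c v / W + 1) * W) := by
        by_contra hcon
        push_neg at hcon
        have : SS c (CI c ((tpos c v / W + 1) * W) + 1) ≤ SS c ((v.1 : ℕ) + 1) :=
          SS_mono c (by omega)
        omega
      have : SS c ((v.1 : ℕ) + 1) ≤ SS c (CI c ((tpos c v / W + 1) * W)) := SS_mono c hij
      omega
  case isFalse h' => omega

lemma middle_facts (hW : 0 < W) (v : (i : Fin m) × Fin (c i))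
    (h1 : ¬ SS c v.1 < tpos c v / W * W)
    (h2 : ¬ (tpos c v / W + 1) * W < SS c v.1 + c v.1) :
    sigma c W v + AA c W (tpos c v / W) = (tpos c v - tpos c v / W * W) + BB c W (tpos c v / W) ∧
    AA c W (tpos c v / W) ≤ tpos c v - tpos c v / W * W ∧
    (tpos c v - tpos c v / W * W) + BB c W (tpos c v / W) < W := by
  have h3 := nonsuffix_AA_le c W v h1
  have h4 := middle_rB c W hW v h1 h2
  have hd := Nat.div_add_mod' (tpos c v) W
  have hσ : sigma c W v = BB c W (tpos c v / W) + (tpos c v % W - AA c W (tpos c v / W)) := by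
    unfold sigma; rw [if_neg h1, if_neg h2]
  refine ⟨by omega, h3, h4⟩

lemma prefix_facts (hW : 0 < W) (v : (i : Fin m) × Fin (c i))
    (h1 : ¬ SS c v.1 < tpos c v / W * W)
    (h2 : (tpos c v / W + 1) * W < SS c v.1 + c v.1) :
    sigma c W v = (v.2 : ℕ) ∧
    sigma c W v + W = (tpos c v - tpos c v / W * W) + BB c W (tpos c v / W) ∧
    sigma c W v < BB c W (tpos c v / W) := by
  have hσ : sigma c W v = (v.2 : ℕ) := by unfold sigma; rw [if_neg h1, if_pos h2]
  have hd := Nat.div_add_mod' (tpos c v) W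
  have hm := Nat.mod_lt (tpos c v) hW
  have hsm : (tpos c v / W + 1) * W = tpos c v / W * W + W := Nat.succ_mul _ _
  have hsucc : SS c ((v.1 : ℕ) + 1) = SS c v.1 + c v.1 := SS_succ' c v.1
  have hts : tpos c v = SS c v.1 + (v.2 : ℕ) := rfl
  have ha : (v.2 : ℕ) < c v.1 := v.2.isLt
  have hxn : (tpos c v / W + 1) * W < SS c m := by
    have h5 : SS c ((v.1 : ℕ) + 1) ≤ SS c m := SS_mono c v.1.isLt
    omega
  have hCI : CI c ((tpos c v / W + 1) * W) = v.1 :=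
    CI_eq c _ _ (le_of_lt v.1.isLt) (by omega) (by omega)
  have hBB : BB c W (tpos c v / W) = (tpos c v / W + 1) * W - SS c v.1 := by
    unfold BB; rw [hCI, if_pos hxn]
  refine ⟨hσ, by omega, by omega⟩

lemma AA_le (hcW : ∀ i : Fin m, c i ≤ W) (p : ℕ) : AA c W p ≤ W := by
  unfold AA
  split
  case isTrue hg =>
    rcases Nat.lt_or_ge (p * W) (SS c m) with hn | hn
    · have h2 := CI_spec2 c _ hn
      have h3 := CI_lt c _ hn
      have hsucc := SS_succ c (CI c (p * W))
      have := cc_le c W hcW (CI c (p * W))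
      omega
    · have hCI : CI c (p * W) = m :=
        le_antisymm (CI_le c _) (Nat.le_findGreatest le_rfl hn)
      have hsucc := SS_succ c m
      have hccm : cc c m = 0 := by unfold cc; rw [dif_neg (lt_irrefl m)]
      rw [hCI] at hg ⊢
      omega
  case isFalse h' => omega

lemma AB_le (hcW : ∀ i : Fin m, c i ≤ W) (p : ℕ) : AA c W p + BB c W p ≤ W := by
  have hA := AA_le c W hcW p
  unfold BB
  split
  case isFalse h' => omega
  case isTrue hg =>
    have hsm : (p + 1) * W = p * W + W := Nat.succ_mul _ _
    have hs1 := CI_spec1 c ((p + 1) * W)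
    have hs2 := CI_spec2 c _ hg
    have hccj := cc_le c W hcW (CI c ((p + 1) * W))
    have hsuccj := SS_succ c (CI c ((p + 1) * W))
    have hkey : p * W + AA c W p ≤ SS c (CI c ((p + 1) * W)) := by
      unfold AA
      split
      case isFalse h' => omega
      case isTrue h' =>
        have hpwn : p * W < SS c m := by omega
        have h2 := CI_spec2 c _ hpwn
        have h3 : CI c (p * W) + 1 ≤ CI c ((p + 1) * W) := by
          by_contra hcon
          push_neg at hcon
          have : SS c (CI c ((p + 1) * W)) ≤ SS c (CI c (p * W)) := SS_mono c (by omega)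
          omega
        have := SS_mono c h3
        omega
    omega

lemma sigma_cases (hW : 0 < W) (hcW : ∀ i : Fin m, c i ≤ W) (v : (i : Fin m) × Fin (c i)) :
    tpos c v / W * W ≤ tpos c v ∧ tpos c v < tpos c v / W * W + W ∧
    ((sigma c W v + AA c W (tpos c v / W) = W + (tpos c v - tpos c v / W * W) ∧
        tpos c v - tpos c v / W * W < AA c W (tpos c v / W)) ∨
      (sigma c W v + W = (tpos c v - tpos c v / W * W) + BB c W (tpos c v / W) ∧
        sigma c W v < BB c W (tpos c v / W)) ∨
      (sigma c W v + AA c W (tpos c v / W) =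
          (tpos c v - tpos c v / W * W) + BB c W (tpos c v / W) ∧
        AA c W (tpos c v / W) ≤ tpos c v - tpos c v / W * W ∧
        (tpos c v - tpos c v / W * W) + BB c W (tpos c v / W) < W)) := by
  have hd := Nat.div_add_mod' (tpos c v) W
  have hm := Nat.mod_lt (tpos c v) hW
  refine ⟨by omega, by omega, ?_⟩
  by_cases h1 : SS c v.1 < tpos c v / W * W
  · exact Or.inl (suffix_facts c W v hcW h1)
  · by_cases h2 : (tpos c v / W + 1) * W < SS c v.1 + c v.1
    · exact Or.inr (Or.inl (prefix_facts c W hW v h1 h2).2)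
    · exact Or.inr (Or.inr (middle_facts c W hW v h1 h2))

lemma sigma_lt (hW : 0 < W) (hcW : ∀ i : Fin m, c i ≤ W) (v : (i : Fin m) × Fin (c i)) :
    sigma c W v < W := by
  obtain ⟨e1, e2, h⟩ := sigma_cases c W hW hcW v
  have hA := AA_le c W hcW (tpos c v / W)
  have hAB := AB_le c W hcW (tpos c v / W)
  rcases h with ⟨h1, h2⟩ | ⟨h1, h2⟩ | ⟨h1, h2, h3⟩ <;> omega

lemma sigma_inj (hW : 0 < W) (hcW : ∀ i : Fin m, c i ≤ W) (u v : (i : Fin m) × Fin (c i))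
    (hb : tpos c u / W = tpos c v / W) (hs : sigma c W u = sigma c W v) : u = v := by
  obtain ⟨eu1, eu2, hu⟩ := sigma_cases c W hW hcW u
  obtain ⟨ev1, ev2, hv⟩ := sigma_cases c W hW hcW v
  rw [hb] at eu1 eu2 hu
  have hA := AA_le c W hcW (tpos c v / W)
  have hAB := AB_le c W hcW (tpos c v / W)
  have ht : tpos c u = tpos c v := by
    rcases hu with ⟨h1, h2⟩ | ⟨h1, h2⟩ | ⟨h1, h2, h3⟩ <;>
      rcases hv with ⟨g1, g2⟩ | ⟨g1, g2⟩ | ⟨g1, g2, g3⟩ <;> omega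
  exact tpos_inj c ht

lemma edge_tpos (u v : (i : Fin m) × Fin (c i)) (h1 : u.1 = v.1)
    (h2 : (u.2 : ℕ) + 1 = (v.2 : ℕ)) : tpos c v = tpos c u + 1 := by
  have hSS : SS c (u.1 : ℕ) = SS c (v.1 : ℕ) := by rw [h1]
  have htu : tpos c u = SS c u.1 + (u.2 : ℕ) := rfl
  have htv : tpos c v = SS c v.1 + (v.2 : ℕ) := rfl
  omega

lemma edge_sigma_same (hW : 0 < W) (hcW : ∀ i : Fin m, c i ≤ W) (u v : (i : Fin m) × Fin (c i))
    (h1 : u.1 = v.1) (h2 : (u.2 : ℕ) + 1 = (v.2 : ℕ))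
    (hb : tpos c u / W = tpos c v / W) : sigma c W v = sigma c W u + 1 := by
  have het : tpos c v = tpos c u + 1 := edge_tpos c u v h1 h2
  have hSS : SS c (u.1 : ℕ) = SS c (v.1 : ℕ) := by rw [h1]
  have hcc : c u.1 = c v.1 := by rw [h1]
  have hdu := Nat.div_add_mod' (tpos c u) W
  have hdv := Nat.div_add_mod' (tpos c v) W
  have hmu := Nat.mod_lt (tpos c u) hW
  have hmv := Nat.mod_lt (tpos c v) hW
  rw [← hb] at hdv
  have hav : (v.2 : ℕ) < c v.1 := v.2.isLt
  by_cases hc1 : SS c u.1 < tpos c u / W * W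
  · have hc1v : SS c v.1 < tpos c v / W * W := by rw [← hSS, ← hb]; exact hc1
    have hσu : sigma c W u = W - (c u.1 - u.2) := by unfold sigma; rw [if_pos hc1]
    have hσv : sigma c W v = W - (c v.1 - v.2) := by unfold sigma; rw [if_pos hc1v]
    have := hcW v.1
    omega
  · by_cases hc2 : (tpos c u / W + 1) * W < SS c u.1 + c u.1
    · have hc2v : (tpos c v / W + 1) * W < SS c v.1 + c v.1 := by
        rw [← hSS, ← hcc, ← hb]; exact hc2
      have hc1v : ¬ SS c v.1 < tpos c v / W * W := by rw [← hSS, ← hb]; exact hc1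
      have hσu : sigma c W u = (u.2 : ℕ) := by unfold sigma; rw [if_neg hc1, if_pos hc2]
      have hσv : sigma c W v = (v.2 : ℕ) := by unfold sigma; rw [if_neg hc1v, if_pos hc2v]
      omega
    · have hc2v : ¬ (tpos c v / W + 1) * W < SS c v.1 + c v.1 := by
        rw [← hSS, ← hcc, ← hb]; exact hc2
      have hc1v : ¬ SS c v.1 < tpos c v / W * W := by rw [← hSS, ← hb]; exact hc1
      have h3 := nonsuffix_AA_le c W u hc1
      have hσu : sigma c W u = BB c W (tpos c u / W) + (tpos c u % W - AA c W (tpos c u / W)) := by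
        unfold sigma; rw [if_neg hc1, if_neg hc2]
      have hσv : sigma c W v = BB c W (tpos c v / W) + (tpos c v % W - AA c W (tpos c v / W)) := by
        unfold sigma; rw [if_neg hc1v, if_neg hc2v]
      rw [← hb] at hσv
      omega

lemma edge_cross (hW : 0 < W) (hcW : ∀ i : Fin m, c i ≤ W) (u v : (i : Fin m) × Fin (c i))
    (h1 : u.1 = v.1) (h2 : (u.2 : ℕ) + 1 = (v.2 : ℕ))
    (hb : tpos c u / W ≠ tpos c v / W) :
    tpos c v / W = tpos c u / W + 1 ∧ tpos c u % W = W - 1 ∧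
    sigma c W u = (u.2 : ℕ) ∧ sigma c W u < sigma c W v := by
  have het : tpos c v = tpos c u + 1 := edge_tpos c u v h1 h2
  have hSS : SS c (u.1 : ℕ) = SS c (v.1 : ℕ) := by rw [h1]
  have hcc : c u.1 = c v.1 := by rw [h1]
  have hdu := Nat.div_add_mod' (tpos c u) W
  have hmu := Nat.mod_lt (tpos c u) hW
  have hmul : W * (tpos c u / W) = tpos c u / W * W := Nat.mul_comm _ _
  have hmul2 : W * (tpos c u / W + 1) = tpos c u / W * W + W := by ring
  have hts_u : tpos c u = SS c u.1 + (u.2 : ℕ) := rfl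
  have hts_v : tpos c v = SS c v.1 + (v.2 : ℕ) := rfl
  have hau : (u.2 : ℕ) < c u.1 := u.2.isLt
  have hav : (v.2 : ℕ) < c v.1 := v.2.isLt
  have hcu := hcW u.1
  have hr : tpos c u % W = W - 1 := by
    by_contra hcon
    have hsame : tpos c v / W = tpos c u / W ∧ tpos c v % W = tpos c u % W + 1 :=
      (Nat.div_mod_unique hW).mpr ⟨by omega, by omega⟩
    exact hb hsame.1.symm
  have hv : tpos c v / W = tpos c u / W + 1 ∧ tpos c v % W = 0 :=
    (Nat.div_mod_unique hW).mpr ⟨by omega, hW⟩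
  have hdv := Nat.div_add_mod' (tpos c v) W
  have hsm : (tpos c u / W + 1) * W = tpos c u / W * W + W := Nat.succ_mul _ _
  have hnc1 : ¬ SS c u.1 < tpos c u / W * W := by
    intro hcon
    omega
  have hc2 : (tpos c u / W + 1) * W < SS c u.1 + c u.1 := by
    omega
  have hσu : sigma c W u = (u.2 : ℕ) := by unfold sigma; rw [if_neg hnc1, if_pos hc2]
  have hc1v : SS c v.1 < tpos c v / W * W := by
    rw [hv.1, hsm, ← hSS]
    omega
  have hσv : sigma c W v = W - (c v.1 - v.2) := by unfold sigma; rw [if_pos hc1v]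
  refine ⟨hv.1, hr, hσu, by omega⟩

end Main

end ChainBSPAux

/-- The total communication cost of an optimal BSP schedule for a chain DAG is at most
`P − 1`: every chain DAG admits a BSP schedule (with `L = 0`) whose total communication
cost is at most `P − 1` and whose total cost is at most
`max ⌈n/P⌉ ℓ_max + (P−1)·g`, where `n` is the number of nodes and `ℓ_max` the length of
the longest chain. -/
theorem chain_dag_bsp_schedule_few_comm (P g m : ℕ) (hP : 0 < P)
    (c : Fin m → ℕ) (hc : ∀ i, 0 < c i) :
    ∃ (S : ℕ) (pi : ((i : Fin m) × Fin (c i)) → Fin P)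
      (tau : ((i : Fin m) × Fin (c i)) → ℕ)
      (Γ : Finset (((i : Fin m) × Fin (c i)) × Fin P × Fin P × ℕ)),
      bspValid (chainEdge c) S pi tau Γ ∧
      (∑ s ∈ Finset.Icc 1 S, bspCommCost Γ s) ≤ P - 1 ∧
      bspCost pi tau Γ g S ≤
        max ((∑ i, c i + P - 1) / P) (Finset.univ.sup c) + (P - 1) * g := by
  classical
  open ChainBSPAux in
  set W := max ((∑ i, c i + P - 1) / P) (Finset.univ.sup c) with hWdef
  have hcW : ∀ i : Fin m, c i ≤ W :=
    fun i => le_trans (Finset.le_sup (Finset.mem_univ i)) (le_max_right _ _)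
  have hn : SS c m = ∑ i, c i := by
    unfold SS
    rw [← Fin.sum_univ_eq_sum_range (fun j => cc c j) m]
    exact Finset.sum_congr rfl fun i _ => cc_eq c i
  have hnPW : SS c m ≤ P * W := by
    have h1 : (∑ i, c i) ≤ P * ((∑ i, c i + P - 1) / P) := by
      have h2 := Nat.div_add_mod ((∑ i, c i) + P - 1) P
      have h3 := Nat.mod_lt ((∑ i, c i) + P - 1) hP
      omega
    have h2 : P * ((∑ i, c i + P - 1) / P) ≤ P * W :=
      Nat.mul_le_mul_left _ (le_max_left _ _)
    omega
  have hWpos : ∀ v : (i : Fin m) × Fin (c i), 0 < W :=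
    fun v => lt_of_lt_of_le (hc v.1) (hcW v.1)
  have hblock : ∀ v : (i : Fin m) × Fin (c i), tpos c v / W < P := by
    intro v
    have h1 : tpos c v < P * W := lt_of_lt_of_le (tpos_lt c v) hnPW
    exact (Nat.div_lt_iff_lt_mul (hWpos v)).mpr h1
  set pi : ((i : Fin m) × Fin (c i)) → Fin P :=
    fun v => ⟨tpos c v / W, hblock v⟩ with hpi
  set tau : ((i : Fin m) × Fin (c i)) → ℕ := fun v => sigma c W v + 1 with htau
  set T : Finset ((i : Fin m) × Fin (c i)) :=
    Finset.univ.filter (fun u => tpos c u % W = W - 1 ∧ (u.2 : ℕ) + 1 < c u.1) with hT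
  set Γ : Finset (((i : Fin m) × Fin (c i)) × Fin P × Fin P × ℕ) :=
    T.image (fun u => (u, pi u, ⟨(tpos c u / W + 1) % P, Nat.mod_lt _ hP⟩, tau u)) with hΓ
  have htau_le : ∀ v, sigma c W v + 1 ≤ W :=
    fun v => Nat.succ_le_of_lt (sigma_lt c W (hWpos v) hcW v)
  -- total communication bound
  have hΓsub : ∀ x ∈ Γ, x.2.2.2 ∈ Finset.Icc 1 W := by
    intro x hx
    rw [hΓ] at hx
    simp only [Finset.mem_image] at hx
    obtain ⟨u, hu, rfl⟩ := hx
    simp only [Finset.mem_Icc, htau]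
    exact ⟨Nat.le_add_left _ _, htau_le u⟩
  have hTcard : T.card ≤ P - 1 := by
    have hmain := Finset.card_le_card_of_injOn (s := T) (f := fun u => tpos c u / W)
      (t := Finset.range (P - 1)) ?_ ?_
    · simpa using hmain
    · intro u hu
      rw [hT] at hu
      simp only [Finset.mem_coe, Finset.mem_filter, Finset.mem_univ, true_and] at hu
      obtain ⟨hr, hsucc⟩ := hu
      have hWp : 0 < W := hWpos u
      have het : tpos c (⟨u.1, ⟨(u.2 : ℕ) + 1, hsucc⟩⟩ : (i : Fin m) × Fin (c i))
          = tpos c u + 1 := edge_tpos c u _ rfl rfl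
      have h1 : tpos c (⟨u.1, ⟨(u.2 : ℕ) + 1, hsucc⟩⟩ : (i : Fin m) × Fin (c i)) < P * W :=
        lt_of_lt_of_le (tpos_lt c _) hnPW
      have hdu := Nat.div_add_mod' (tpos c u) W
      simp only [Finset.mem_coe, Finset.mem_range]
      have h2 : (tpos c u / W + 1) * W < P * W := by
        have hsm : (tpos c u / W + 1) * W = tpos c u / W * W + W := Nat.succ_mul _ _
        omega
      have h3 : tpos c u / W + 1 < P := lt_of_mul_lt_mul_right h2 (Nat.zero_le W)
      omega
    · intro u1 h1 u2 h2 heq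
      simp only [Finset.mem_coe, hT, Finset.mem_filter, Finset.mem_univ, true_and] at h1 h2
      simp only at heq
      apply tpos_inj c
      have hd1 := Nat.div_add_mod' (tpos c u1) W
      have hd2 := Nat.div_add_mod' (tpos c u2) W
      rw [heq] at hd1
      have hWp : 0 < W := hWpos u1
      omega
  have hcomm : (∑ s ∈ Finset.Icc 1 W, bspCommCost Γ s) ≤ P - 1 := by
    calc ∑ s ∈ Finset.Icc 1 W, bspCommCost Γ s
        ≤ ∑ s ∈ Finset.Icc 1 W, (Γ.filter (fun x => x.2.2.2 = s)).card := by
          apply Finset.sum_le_sum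
          intro s _
          unfold bspCommCost
          apply Finset.sup_le
          intro p _
          apply max_le <;>
          · apply Finset.card_le_card
            intro x hx
            simp only [Finset.mem_filter] at hx ⊢
            exact ⟨hx.1, hx.2.2⟩
      _ = Γ.card := (Finset.card_eq_sum_card_fiberwise hΓsub).symm
      _ ≤ T.card := by rw [hΓ]; exact Finset.card_image_le
      _ ≤ P - 1 := hTcard
  refine ⟨W, pi, tau, Γ, ⟨?_, ?_, ?_⟩, hcomm, ?_⟩
  · intro v
    exact ⟨Nat.le_add_left _ _, htau_le v⟩
  · intro x hx
    rw [hΓ] at hx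
    simp only [Finset.mem_image] at hx
    obtain ⟨u, hu, rfl⟩ := hx
    exact ⟨Nat.le_add_left _ _, htau_le u, rfl, le_refl _⟩
  · intro u v h
    obtain ⟨h1, h2⟩ := h
    constructor
    · intro hpieq
      have hb : tpos c u / W = tpos c v / W := by
        have h3 := congrArg Fin.val hpieq
        simpa [hpi] using h3
      have h4 := edge_sigma_same c W (hWpos u) hcW u v h1 h2 hb
      simp only [htau]
      omega
    · intro hpine
      have hb : tpos c u / W ≠ tpos c v / W := by
        intro hcon
        exact hpine (by simp only [hpi]; exact Fin.ext hcon)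
      obtain ⟨hdv, hr, hσu, hlt⟩ := edge_cross c W (hWpos u) hcW u v h1 h2 hb
      refine ⟨sigma c W u + 1, ?_, by simp only [htau]; omega⟩
      rw [hΓ]
      simp only [Finset.mem_image]
      refine ⟨u, ?_, ?_⟩
      · rw [hT]
        simp only [Finset.mem_filter, Finset.mem_univ, true_and]
        refine ⟨hr, ?_⟩
        have hcc : c u.1 = c v.1 := by rw [h1]
        have h5 : (v.2 : ℕ) < c v.1 := v.2.isLt
        omega
      · have h3 : (tpos c u / W + 1) % P = tpos c v / W := by
          rw [hdv]
          exact Nat.mod_eq_of_lt (by rw [← hdv]; exact hblock v)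
        simp only [hpi, htau, Prod.mk.injEq, Fin.mk.injEq, true_and, and_true]
        exact h3
  · unfold bspCost
    have hwork : ∀ s, bspWork pi tau s ≤ 1 := by
      intro s
      unfold bspWork
      apply Finset.sup_le
      intro p _
      rw [Finset.card_le_one]
      intro a ha b hb
      simp only [Finset.mem_filter, Finset.mem_univ, true_and] at ha hb
      have hbl : tpos c a / W = tpos c b / W := by
        have h4 : pi a = pi b := ha.1.trans hb.1.symm
        have h5 := congrArg Fin.val h4
        simpa [hpi] using h5
      have hσ : sigma c W a = sigma c W b := by
        have h4 : tau a = tau b := ha.2.trans hb.2.symm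
        simp only [htau] at h4
        omega
      exact sigma_inj c W (hWpos a) hcW a b hbl hσ
    calc ∑ s ∈ Finset.Icc 1 W, (bspWork pi tau s + g * bspCommCost Γ s)
        = (∑ s ∈ Finset.Icc 1 W, bspWork pi tau s)
          + ∑ s ∈ Finset.Icc 1 W, g * bspCommCost Γ s := Finset.sum_add_distrib
      _ ≤ W + (P - 1) * g := by
          apply Nat.add_le_add
          · calc ∑ s ∈ Finset.Icc 1 W, bspWork pi tau s
                ≤ ∑ _s ∈ Finset.Icc 1 W, 1 := Finset.sum_le_sum fun s _ => hwork s
              _ = W := by simp [Nat.card_Icc]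
          · rw [← Finset.mul_sum]
            calc g * ∑ s ∈ Finset.Icc 1 W, bspCommCost Γ s
                ≤ g * (P - 1) := Nat.mul_le_mul_left _ hcomm
              _ = (P - 1) * g := Nat.mul_comm _ _
end

section
/- With P = 2 processors and node communication weights, the communication scheduling subproblem of BSP is NP-hard, via reduction from 3-partition: given numbers a_1,...,a_{3m'} summing to m'·T with T/4 < a_i < T/2, the constructed instance with m'+1 supersteps and forced weight-T transfers from p1 to p2 in each of the first m' supersteps admits a communication schedule of total communication cost m'·T if and only if the numbers can be partitioned into m' triples each summing to T. -/
/-- Core of the NP-hardness reduction from 3-partition to communication scheduling with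
communication weights on `P = 2` processors: numbers `a_1, ..., a_{3m'}` with
`∑ a_i = m'·T` and `T/4 < a_i < T/2` are placed as values computed on `p2` in superstep 1
and needed on `p1` only in superstep `m'+1`, while each superstep `s ∈ [m']` has a forced
transfer of weight `T` from `p1` to `p2`. A communication schedule (an assignment
`σ` of each value to a sending superstep) of total communication cost `m'·T` exists
(the cost of superstep `s` being the maximum of the two directions' weights, i.e.
`max T (∑_{σ i = s} a_i)`) if and only if the numbers can be partitioned into `m'`
triples each summing to `T`. -/
theorem cs_with_weights_three_partition (m' T : ℕ) (a : Fin (3 * m') → ℕ)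
    (hsum : ∑ i, a i = m' * T)
    (hlo : ∀ i, T < 4 * a i) (hhi : ∀ i, 2 * a i < T) :
    (∃ σ : Fin (3 * m') → Fin m',
      ∑ s : Fin m',
        max T (∑ i ∈ Finset.univ.filter (fun i => σ i = s), a i) = m' * T) ↔
    (∃ σ : Fin (3 * m') → Fin m', ∀ s : Fin m',
      (Finset.univ.filter (fun i => σ i = s)).card = 3 ∧
      ∑ i ∈ Finset.univ.filter (fun i => σ i = s), a i = T) := by
  constructor
  · rintro ⟨σ, hσ⟩
    refine ⟨σ, fun s => ?_⟩
    -- abbreviations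
    set S : Fin m' → ℕ := fun s => ∑ i ∈ Finset.univ.filter (fun i => σ i = s), a i with hS
    have hm' : 0 < m' := Nat.pos_of_ne_zero (fun h => by subst h; exact absurd s.2 (by simp))
    have hT : 0 < T := by
      have i0 : Fin (3 * m') := ⟨0, by omega⟩
      have := hhi i0; omega
    -- fiberwise sum
    have hfib : ∑ t : Fin m', S t = m' * T := by
      rw [hS]
      rw [Finset.sum_fiberwise_of_maps_to (fun i _ => Finset.mem_univ (σ i))]
      exact hsum
    -- sum of constants
    have hconst : ∑ _t : Fin m', T = m' * T := by
      simp [Finset.sum_const, mul_comm]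
    -- each max equals T
    have hmax : ∀ t ∈ Finset.univ, T = max T (S t) := by
      rw [← Finset.sum_eq_sum_iff_of_le (fun t _ => le_max_left T (S t))]
      rw [hσ, hconst]
    have hle : ∀ t : Fin m', S t ≤ T := fun t => by
      have := (hmax t (Finset.mem_univ t)).symm; simp [max_eq_left_iff] at this; omega
    -- hence each S t = T
    have hST : ∀ t : Fin m', S t = T := by
      have := (Finset.sum_eq_sum_iff_of_le (fun t (_ : t ∈ Finset.univ) => hle t)).mp
        (by rw [hfib, hconst])
      exact fun t => this t (Finset.mem_univ t)
    have hSs : S s = T := hST s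
    -- cardinality bounds
    set F := Finset.univ.filter (fun i => σ i = s) with hF
    have h1 : F.card * (T + 1) ≤ 4 * S s := by
      have h : ∑ i ∈ F, (T + 1) ≤ ∑ i ∈ F, 4 * a i :=
        Finset.sum_le_sum (fun i _ => hlo i)
      rw [Finset.sum_const, smul_eq_mul, ← Finset.mul_sum] at h
      exact h
    have h2 : 2 * S s + F.card ≤ F.card * T := by
      have h : ∑ i ∈ F, (2 * a i + 1) ≤ ∑ i ∈ F, T :=
        Finset.sum_le_sum (fun i _ => hhi i)
      rw [Finset.sum_add_distrib, Finset.sum_const, Finset.sum_const, smul_eq_mul, smul_eq_mul,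
        mul_one, ← Finset.mul_sum] at h
      exact h
    constructor
    · -- card = 3
      rw [hSs] at h1 h2
      nlinarith [h1, h2, hT]
    · exact hSs
  · rintro ⟨σ, hσ⟩
    refine ⟨σ, ?_⟩
    have : ∀ s : Fin m', max T (∑ i ∈ Finset.univ.filter (fun i => σ i = s), a i) = T := by
      intro s; rw [(hσ s).2]; simp
    rw [Finset.sum_congr rfl (fun s _ => this s)]
    simp [Finset.sum_const, mul_comm]
end

section
/- In the greedy communication scheduling exchange argument for P = 2: if values u_1, ..., u_k (ordered by the superstep in which they are first needed on the other processor) are each valid to send in superstep s, and a schedule sends instead values û_1, ..., û_{k'} (k' ≤ k, ordered the same way, with û_i needed no earlier than u_i), then exchanging the transmission supersteps of u_i and û_i for each i ∈ [k'] yields another valid communication schedule of the same cost. -/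
/-- Validity of a communication schedule (P = 2, one direction): each value `x` is sent in
a superstep between its computation superstep `comp x` and strictly before the superstep
`need x` in which it is first needed on the other processor. -/
def csValid {ι : Type} (comp need σ : ι → ℕ) : Prop :=
  ∀ x, comp x ≤ σ x ∧ σ x < need x

/-- The greedy exchange argument for communication scheduling with `P = 2`: if values
`u 1, ..., u k` (ordered by first need) are each already computed by superstep `s` and
valid to send in superstep `s`, and a valid schedule `σ` instead sends the distinct values
`û 1, ..., û k'` (`k' ≤ k`, each needed no earlier than the corresponding `u i`, each
computed by `s`) in superstep `s`, while sending each `u i` at superstep `≥ s`, then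
exchanging the transmission supersteps of `u i` and `û i` for each `i` yields another valid
communication schedule sending the same number of values in every superstep (hence of the
same cost). -/
theorem cs_exchange_argument {ι : Type} [Fintype ι] [DecidableEq ι]
    (comp need : ι → ℕ) (σ : ι → ℕ) (hσ : csValid comp need σ)
    (s k k' : ℕ) (hk : k' ≤ k) (u : Fin k → ι) (uh : Fin k' → ι)
    (hu_inj : Function.Injective u) (huh_inj : Function.Injective uh)
    (hdisj : ∀ i j, u i ≠ uh j)
    (hu_valid : ∀ i, comp (u i) ≤ s ∧ s < need (u i))
    (hu_late : ∀ i, s ≤ σ (u i))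
    (huh_at_s : ∀ i, σ (uh i) = s)
    (huh_comp : ∀ i, comp (uh i) ≤ s)
    (hneed : ∀ i : Fin k', need (u (Fin.castLE hk i)) ≤ need (uh i)) :
    ∃ σ' : ι → ℕ,
      (∀ i : Fin k', σ' (u (Fin.castLE hk i)) = σ (uh i)) ∧
      (∀ i : Fin k', σ' (uh i) = σ (u (Fin.castLE hk i))) ∧
      (∀ x, (∀ i : Fin k', x ≠ u (Fin.castLE hk i) ∧ x ≠ uh i) → σ' x = σ x) ∧
      csValid comp need σ' ∧
      (∀ s' : ℕ, (Finset.univ.filter (fun x => σ' x = s')).card =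
        (Finset.univ.filter (fun x => σ x = s')).card) := by
  classical
  have hcast : Function.Injective (fun i : Fin k' => u (Fin.castLE hk i)) := by
    intro i j h
    have := hu_inj h
    exact Fin.ext (by simpa using congrArg Fin.val this)
  -- the swap function
  set f : ι → ι := fun x =>
    if h : ∃ i : Fin k', u (Fin.castLE hk i) = x then uh h.choose
    else if h : ∃ i : Fin k', uh i = x then u (Fin.castLE hk h.choose)
    else x with hf
  have hfu : ∀ i : Fin k', f (u (Fin.castLE hk i)) = uh i := by
    intro i
    have h : ∃ j : Fin k', u (Fin.castLE hk j) = u (Fin.castLE hk i) := ⟨i, rfl⟩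
    simp only [hf, dif_pos h]
    exact congrArg uh (hcast h.choose_spec)
  have hfuh : ∀ i : Fin k', f (uh i) = u (Fin.castLE hk i) := by
    intro i
    have h1 : ¬∃ j : Fin k', u (Fin.castLE hk j) = uh i := by
      rintro ⟨j, hj⟩; exact hdisj _ _ hj
    have h2 : ∃ j : Fin k', uh j = uh i := ⟨i, rfl⟩
    simp only [hf, dif_neg h1, dif_pos h2]
    exact congrArg (fun j => u (Fin.castLE hk j)) (huh_inj h2.choose_spec)
  have hfo : ∀ x, (∀ i : Fin k', x ≠ u (Fin.castLE hk i) ∧ x ≠ uh i) → f x = x := by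
    intro x hx
    have h1 : ¬∃ j : Fin k', u (Fin.castLE hk j) = x := by
      rintro ⟨j, hj⟩; exact (hx j).1 hj.symm
    have h2 : ¬∃ j : Fin k', uh j = x := by
      rintro ⟨j, hj⟩; exact (hx j).2 hj.symm
    simp only [hf, dif_neg h1, dif_neg h2]
  have hinv : ∀ x, f (f x) = x := by
    intro x
    by_cases h1 : ∃ i : Fin k', u (Fin.castLE hk i) = x
    · obtain ⟨i, rfl⟩ := h1
      rw [hfu, hfuh]
    · by_cases h2 : ∃ i : Fin k', uh i = x
      · obtain ⟨i, rfl⟩ := h2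
        rw [hfuh, hfu]
      · have hx : ∀ i : Fin k', x ≠ u (Fin.castLE hk i) ∧ x ≠ uh i := by
          intro i
          exact ⟨fun h => h1 ⟨i, h.symm⟩, fun h => h2 ⟨i, h.symm⟩⟩
        rw [hfo x hx, hfo x hx]
  refine ⟨σ ∘ f, ?_, ?_, ?_, ?_, ?_⟩
  · intro i; simp [hfu i]
  · intro i; simp [hfuh i]
  · intro x hx; simp [hfo x hx]
  · intro x
    by_cases h1 : ∃ i : Fin k', u (Fin.castLE hk i) = x
    · obtain ⟨i, rfl⟩ := h1
      simp only [Function.comp_apply, hfu i, huh_at_s i]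
      exact hu_valid _
    · by_cases h2 : ∃ i : Fin k', uh i = x
      · obtain ⟨i, rfl⟩ := h2
        simp only [Function.comp_apply, hfuh i]
        exact ⟨le_trans (huh_comp i) (hu_late _),
          lt_of_lt_of_le (hσ _).2 (hneed i)⟩
      · have hx : ∀ i : Fin k', x ≠ u (Fin.castLE hk i) ∧ x ≠ uh i := by
          intro i
          exact ⟨fun h => h1 ⟨i, h.symm⟩, fun h => h2 ⟨i, h.symm⟩⟩
        simp only [Function.comp_apply, hfo x hx]
        exact hσ x
  · intro s'
    apply Finset.card_bij' (fun x _ => f x) (fun x _ => f x)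
    · intro x hx
      simp only [Finset.mem_filter, Finset.mem_univ, true_and] at hx ⊢
      exact hx
    · intro x hx
      simp only [Finset.mem_filter, Finset.mem_univ, true_and, Function.comp_apply] at hx ⊢
      rw [hinv x]; exact hx
    · intro x _; exact hinv x
    · intro x _; exact hinv x
end

section
/- In 3D-matching, a family of N triplets over X × Y × Z with |X| = |Y| = |Z| = N forms an exact cover if and only if it satisfies all prefix and suffix counting constraints: for every i, the triplets contain elements of {x_1,...,x_i} at most i times and elements of {x_i,...,x_N} at most N−i+1 times (and likewise for Y and Z, under a fixed ordering of each class). -/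
open Finset

private lemma card_filter_comp_bij {N : ℕ} {f : Fin N → Fin N} (hf : Function.Bijective f)
    (s : Finset (Fin N)) : (univ.filter (fun t => f t ∈ s)).card = s.card := by
  rw [← Finset.card_image_of_injective (univ.filter (fun t => f t ∈ s)) hf.injective]
  congr 1
  ext y
  simp only [Finset.mem_image, Finset.mem_filter, Finset.mem_univ, true_and]
  constructor
  · rintro ⟨t, ht, rfl⟩; exact ht
  · intro hy
    obtain ⟨t, rfl⟩ := hf.surjective y
    exact ⟨t, hy, rfl⟩

private lemma bij_iff_constraints {N : ℕ} (f : Fin N → Fin N) :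
    Function.Bijective f ↔ ∀ j : Fin N,
      (Finset.univ.filter (fun t => f t ≤ j)).card ≤ (j : ℕ) + 1 ∧
      (Finset.univ.filter (fun t => j ≤ f t)).card ≤ N - (j : ℕ) := by
  constructor
  · intro hf j
    constructor
    · have := card_filter_comp_bij hf (Finset.Iic j)
      simp only [Finset.mem_Iic] at this
      rw [this, Fin.card_Iic]
    · have := card_filter_comp_bij hf (Finset.Ici j)
      simp only [Finset.mem_Ici] at this
      rw [this, Fin.card_Ici]
  · intro h
    -- first: the prefix counts are exactly j+1
    have hN : ∀ j : Fin N, ((j : ℕ) + 1 ≤ N) := fun j => j.2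
    have hexact : ∀ j : Fin N,
        (univ.filter (fun t => f t ≤ j)).card = (j : ℕ) + 1 := by
      intro j
      refine le_antisymm (h j).1 ?_
      by_cases hjtop : (j : ℕ) + 1 = N
      · have : univ.filter (fun t => f t ≤ j) = univ := by
          apply Finset.filter_true_of_mem
          intro t _
          have := (f t).2
          omega
        rw [this, Finset.card_univ, Fintype.card_fin]
        omega
      · have hjlt : (j : ℕ) + 1 < N := lt_of_le_of_ne (hN j) hjtop
        set j' : Fin N := ⟨(j : ℕ) + 1, hjlt⟩ with hj'
        have hfe : univ.filter (fun t => ¬ f t ≤ j) = univ.filter (fun t => j' ≤ f t) := by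
          ext t
          simp only [Finset.mem_filter, Finset.mem_univ, true_and, not_le, Fin.lt_def,
            Fin.le_def, hj']
          omega
        have hsplit : (univ.filter (fun t => f t ≤ j)).card
            + (univ.filter (fun t => j' ≤ f t)).card = N := by
          have hc := Finset.card_filter_add_card_filter_not
            (p := fun t => f t ≤ j) (s := (univ : Finset (Fin N)))
          rw [hfe] at hc
          simpa using hc
        have h2 := (h j').2
        have hval : (j' : ℕ) = (j : ℕ) + 1 := rfl
        omega
    -- each fiber is nonempty, so f is surjective
    have hsurj : Function.Surjective f := by
      intro j
      by_cases hj0 : (j : ℕ) = 0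
      · have := hexact j
        rw [hj0] at this
        have hne : (univ.filter (fun t => f t ≤ j)).Nonempty := by
          rw [← Finset.card_pos, this]; omega
        obtain ⟨t, ht⟩ := hne
        simp only [Finset.mem_filter] at ht
        refine ⟨t, ?_⟩
        have : (f t : ℕ) ≤ (j : ℕ) := ht.2
        apply Fin.ext; omega
      · have hjpos : 0 < (j : ℕ) := Nat.pos_of_ne_zero hj0
        set j' : Fin N := ⟨(j : ℕ) - 1, by omega⟩ with hj'
        have hval : (j' : ℕ) = (j : ℕ) - 1 := rfl
        have hsub : (univ.filter (fun t => f t ≤ j')) ⊆ (univ.filter (fun t => f t ≤ j)) := by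
          intro t ht
          simp only [Finset.mem_filter, Finset.mem_univ, true_and, Fin.le_def] at ht ⊢
          omega
        have hdiff : ((univ.filter (fun t => f t ≤ j)) \ (univ.filter (fun t => f t ≤ j'))).card
            = 1 := by
          rw [Finset.card_sdiff_of_subset hsub, hexact, hexact]
          omega
        have hne : ((univ.filter (fun t => f t ≤ j)) \
            (univ.filter (fun t => f t ≤ j'))).Nonempty := by
          rw [← Finset.card_pos, hdiff]; omega
        obtain ⟨t, ht⟩ := hne
        simp only [Finset.mem_sdiff, Finset.mem_filter, Finset.mem_univ, true_and, not_le,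
          Fin.le_def, Fin.lt_def] at ht
        refine ⟨t, ?_⟩
        apply Fin.ext
        omega
    exact Finite.surjective_iff_bijective.mp hsurj

/-- A family of `N` triplets over `X × Y × Z` with `|X| = |Y| = |Z| = N` (given by the
index functions `fx, fy, fz : Fin N → Fin N` of their coordinates) forms an exact cover
(every element appears in exactly one triplet, i.e. each coordinate map is bijective) if
and only if it satisfies all prefix and suffix counting constraints: for every `j`, the
triplets contain elements of `{x_0, ..., x_j}` at most `j+1` times and elements of
`{x_j, ..., x_{N-1}}` at most `N − j` times, and likewise for `Y` and `Z`. -/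
theorem exact_cover_iff_prefix_suffix_constraints (N : ℕ)
    (fx fy fz : Fin N → Fin N) :
    (Function.Bijective fx ∧ Function.Bijective fy ∧ Function.Bijective fz) ↔
    ((∀ j : Fin N,
        (Finset.univ.filter (fun t => fx t ≤ j)).card ≤ (j : ℕ) + 1 ∧
        (Finset.univ.filter (fun t => j ≤ fx t)).card ≤ N - (j : ℕ)) ∧
     (∀ j : Fin N,
        (Finset.univ.filter (fun t => fy t ≤ j)).card ≤ (j : ℕ) + 1 ∧
        (Finset.univ.filter (fun t => j ≤ fy t)).card ≤ N - (j : ℕ)) ∧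
     (∀ j : Fin N,
        (Finset.univ.filter (fun t => fz t ≤ j)).card ≤ (j : ℕ) + 1 ∧
        (Finset.univ.filter (fun t => j ≤ fz t)).card ≤ N - (j : ℕ))) := by
  rw [bij_iff_constraints fx, bij_iff_constraints fy, bij_iff_constraints fz]
end
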